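/- arXiv:hep-th/9412037 — 2 statements merged into one kernel-verified Lean document; each statement's English description precedes it below -/
import Mathlib

section
/- Let G be a finite group and let H and K be distinct subgroups of G. Then there exists a finite-dimensional irreducible complex representation W of G such that the fixed subspace W^H is different from the fixed subspace W^K. (Lemma 3.2 of the paper.) -/
/-! The basis vector `e = [K]` of the permutation representation `ℂ[G ⧸ K]` is fixed by `K`,
and if `H ⊄ K` some `h ∈ H` moves it, so `ρ h e - e ≠ 0`. By Maschke the representation is
semisimple, hence its radical (the intersection of its maximal subrepresentations) vanishes and
some maximal subrepresentation `U` misses `ρ h e - e`. In the irreducible quotient by `U`, the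
image of `e` is then fixed by `K` but not by `H`. -/

open Representation

/-- The subspace of vectors of a representation `ρ` fixed by every element of
a subgroup `H`. -/
def fixedSubspace {G V : Type*} [Group G] [AddCommGroup V] [Module ℂ V]
    (ρ : Representation ℂ G V) (H : Subgroup G) : Submodule ℂ V where
  carrier := {v | ∀ h ∈ H, ρ h v = v}
  add_mem' := by
    intro a b ha hb
    intro h hh
    rw [map_add, ha h hh, hb h hh]
  zero_mem' := by
    intro h hh
    rw [map_zero]
  smul_mem' := by
    intro c v hv h hh
    rw [map_smul, hv h hh]

open scoped MonoidAlgebra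

namespace Subrepresentation

variable {k G V : Type*} [Field k] [Monoid G] [AddCommGroup V] [Module k V]
  {ρ : Representation k G V}

protected theorem nontrivial_iff : Nontrivial (Subrepresentation ρ) ↔ Nontrivial V := by
  refine Iff.trans ?_ (Submodule.nontrivial_iff k)
  exact ⟨fun ⟨p, q, hpq⟩ => ⟨p.toSubmodule, q.toSubmodule, fun h => hpq (Subrepresentation.ext h)⟩,
    fun _ => ⟨⊥, ⊤, fun h => bot_ne_top (congrArg toSubmodule h)⟩⟩

theorem exists_isCoatom_notMem [IsSemisimpleRepresentation ρ] {v : V} (hv : v ≠ 0) :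
    ∃ U : Subrepresentation ρ, IsCoatom U ∧ v ∉ U := by
  have := (isSemisimpleRepresentation_iff_isSemisimpleModule_asModule ρ).mp ‹_›
  have hv' : ρ.asModuleEquiv.symm v ∉ Module.jacobson k[G] ρ.asModule := by
    simpa [IsSemisimpleModule.jacobson_eq_bot] using hv
  obtain ⟨m, hm, hvm⟩ := not_forall₂.mp (mt Submodule.mem_sInf.mpr hv')
  exact ⟨ofSubmodule' m, (subrepresentationSubmoduleOrderIso.isCoatom_iff _).mp hm, hvm⟩

def quotient (U : Subrepresentation ρ) : Representation k G (V ⧸ U.toSubmodule) :=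
  ρ.quotient U.toSubmodule fun g _ hv => U.apply_mem_toSubmodule g hv

theorem isIrreducible_quotient {U : Subrepresentation ρ} (hU : IsCoatom U) :
    IsIrreducible U.quotient := by
  have : Nontrivial (Subrepresentation U.quotient) :=
    Subrepresentation.nontrivial_iff.mpr <|
      Submodule.Quotient.nontrivial_iff.mpr fun h => hU.1 (toSubmodule_injective h)
  refine ⟨fun p => ?_⟩
  let q : Subrepresentation ρ :=
    ⟨p.toSubmodule.comap U.toSubmodule.mkQ, fun g _ hv => p.apply_mem_toSubmodule g hv⟩
  have hpq : p.toSubmodule = q.toSubmodule.map U.toSubmodule.mkQ :=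
    (Submodule.map_comap_eq_of_surjective U.toSubmodule.mkQ_surjective _).symm
  have hUq : U ≤ q := fun v hv => by
    change U.toSubmodule.mkQ v ∈ p.toSubmodule
    rw [Submodule.mkQ_apply, (Submodule.Quotient.mk_eq_zero _).mpr hv]
    exact zero_mem _
  rcases hU.le_iff.mp hUq with hq | hq
  · right
    ext1
    rw [hpq, hq]
    exact (Submodule.map_top _).trans (Submodule.range_mkQ _)
  · left
    ext1
    rw [hpq, hq]
    exact Submodule.mkQ_map_self _

end Subrepresentation

namespace Representation.IsIrreducible

variable {k G V : Type*} [Field k] [Monoid G] [AddCommGroup V] [Module k V]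
  (ρ : Representation k G V) [IsIrreducible ρ]

include ρ in
theorem nontrivial : Nontrivial V :=
  (Subrepresentation.nontrivial_iff (ρ := ρ)).mp inferInstance

theorem eq_bot_or_eq_top_of_forall_apply_mem (p : Submodule k V)
    (hp : ∀ g, ∀ v ∈ p, ρ g v ∈ p) : p = ⊥ ∨ p = ⊤ :=
  (eq_bot_or_eq_top (⟨p, fun g v hv => hp g v hv⟩ : Subrepresentation ρ)).imp
    (congrArg Subrepresentation.toSubmodule) (congrArg Subrepresentation.toSubmodule)

end Representation.IsIrreducible

section FixedSubspace

variable {G V : Type*} [Group G] [AddCommGroup V] [Module ℂ V] {ρ : Representation ℂ G V}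

theorem Subrepresentation.mkQ_mem_fixedSubspace_quotient_iff (U : Subrepresentation ρ)
    (H : Subgroup G) (v : V) :
    U.toSubmodule.mkQ v ∈ fixedSubspace U.quotient H ↔ ∀ h ∈ H, ρ h v - v ∈ U :=
  forall₂_congr fun _ _ => Submodule.Quotient.eq _

theorem single_one_mem_fixedSubspace_ofMulAction_iff (H K : Subgroup G) :
    MonoidAlgebra.single ((1 : G) : G ⧸ K) (1 : ℂ) ∈ fixedSubspace (ofMulAction ℂ G (G ⧸ K)) H ↔
      H ≤ K := by
  refine forall₂_congr fun h _ => ?_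
  rw [ofMulAction_single, MonoidAlgebra.single_left_inj one_ne_zero, MulAction.Quotient.smul_mk,
    smul_eq_mul, mul_one, QuotientGroup.eq]
  simp

end FixedSubspace

theorem exists_isIrreducible_fixedSubspace_ne {G V : Type} [Group G] [Finite G] [AddCommGroup V]
    [Module ℂ V] [FiniteDimensional ℂ V] (ρ : Representation ℂ G V) {H K : Subgroup G} {v : V}
    (hvK : v ∈ fixedSubspace ρ K) (hvH : v ∉ fixedSubspace ρ H) :
    ∃ W : FDRep ℂ G, IsIrreducible W.ρ ∧ fixedSubspace W.ρ H ≠ fixedSubspace W.ρ K := by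
  obtain ⟨h, hh, hhv⟩ : ∃ h ∈ H, ρ h v ≠ v := by
    simpa [fixedSubspace] using hvH
  obtain ⟨U, hU, hvU⟩ := Subrepresentation.exists_isCoatom_notMem (ρ := ρ) (sub_ne_zero.mpr hhv)
  refine ⟨FDRep.of U.quotient, Subrepresentation.isIrreducible_quotient hU, fun hHK => hvU ?_⟩
  have hvK' : U.toSubmodule.mkQ v ∈ fixedSubspace U.quotient K :=
    (U.mkQ_mem_fixedSubspace_quotient_iff K v).mpr fun k hk => by
      rw [hvK k hk, sub_self]
      exact U.toSubmodule.zero_mem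
  exact (U.mkQ_mem_fixedSubspace_quotient_iff H v).mp (hHK ▸ hvK') h hh

theorem exists_isIrreducible_fixedSubspace_ne_of_not_le {G : Type} [Group G] [Finite G]
    {H K : Subgroup G} (hHK : ¬ H ≤ K) :
    ∃ W : FDRep ℂ G, IsIrreducible W.ρ ∧ fixedSubspace W.ρ H ≠ fixedSubspace W.ρ K :=
  exists_isIrreducible_fixedSubspace_ne (ofMulAction ℂ G (G ⧸ K))
    ((single_one_mem_fixedSubspace_ofMulAction_iff K K).mpr le_rfl)
    (mt (single_one_mem_fixedSubspace_ofMulAction_iff H K).mp hHK)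

/-- **Lemma 3.2.** If `H` and `K` are distinct subgroups of a finite group `G`,
then there is a finite-dimensional irreducible complex representation `W` of `G`
with `W^H ≠ W^K`. -/
theorem distinct_subgroups_distinct_invariants
    (G : Type) [Group G] [Fintype G] (H K : Subgroup G) (hHK : H ≠ K) :
    ∃ W : FDRep ℂ G,
      (Nontrivial W ∧
        ∀ p : Submodule ℂ W, (∀ g : G, ∀ w ∈ p, W.ρ g w ∈ p) → p = ⊥ ∨ p = ⊤) ∧
      fixedSubspace W.ρ H ≠ fixedSubspace W.ρ K := by
  obtain ⟨W, hW, hne⟩ : ∃ W : FDRep ℂ G, IsIrreducible W.ρ ∧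
      fixedSubspace W.ρ H ≠ fixedSubspace W.ρ K := by
    by_cases hle : H ≤ K
    · obtain ⟨W, hW, hne⟩ :=
        exists_isIrreducible_fixedSubspace_ne_of_not_le fun hKH => hHK (le_antisymm hle hKH)
      exact ⟨W, hW, hne.symm⟩
    · exact exists_isIrreducible_fixedSubspace_ne_of_not_le hle
  exact ⟨W, ⟨IsIrreducible.nontrivial W.ρ,
    IsIrreducible.eq_bot_or_eq_top_of_forall_apply_mem W.ρ⟩, hne⟩
end

section
/- Let p ≥ 1 be an integer, let W_0, W_1, ..., W_{p-1} be nonzero finite-dimensional complex vector spaces indexed by ℤ/pℤ, and let B = ∏_{i ∈ ℤ/pℤ} End(W_i) be the product algebra. Let σ be a ℂ-algebra automorphism of B with σ^p = id which shifts the factors cyclically, i.e., σ maps the ideal B_i = End(W_i) (embedded as the tuples vanishing in all other coordinates) onto B_{i+1} for every i. Let λ = e^{2πi/p} and for j ∈ ℤ set B^j = { b ∈ B : σ(b) = λ^j b } (the λ^j-eigenspace of σ on B). Then for every i, every j, and every nonzero vector w ∈ W_i, one has B^j · w = W_i, where b ∈ B acts on W_i through the i-th coordinate projection B → End(W_i).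 In other words, each eigenspace of σ acts transitively (irreducibly) on each W_i. (Eigenspace transitivity step in the proof of Theorem 6.1.) -/
/-!
Pick `f ∈ End(W i)` with `f w = v` and put `b = Pi.single i f`. Since `σ` shifts supports, `σᵏ b`
is supported at `i + k`, so only the term `k = 0` of the averaged element
`c = ∑_{k < p} λ^{-jk} σᵏ b` has a nonzero `i`-th coordinate, and `c i = f`. On the other hand
`σᵖ = 1` and `(λ^j)ᵖ = 1` make `c` a `λ^j`-eigenvector of `σ`.
-/

open Finset Set

theorem Module.End.exists_apply_eq_of_ne_zero {K V : Type*} [Field K] [AddCommGroup V]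
    [Module K V] {w : V} (hw : w ≠ 0) (v : V) : ∃ f : Module.End K V, f w = v := by
  obtain ⟨φ, hφ⟩ := Module.Projective.exists_dual_eq_one K hw
  exact ⟨φ.smulRight v, by rw [LinearMap.smulRight_apply, hφ, one_smul]⟩

theorem LinearMap.apply_sum_inv_pow_smul_iterate {K M : Type*} [Field K] [AddCommGroup M]
    [Module K M] (f : M →ₗ[K] M) {p : ℕ} {x : M} (hx : f^[p] x = x) {μ : K} (hμ : μ ^ p = 1) :
    f (∑ k ∈ Finset.range p, μ⁻¹ ^ k • f^[k] x) = μ • ∑ k ∈ Finset.range p, μ⁻¹ ^ k • f^[k] x := by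
  rcases p.eq_zero_or_pos with rfl | hp
  · simp
  have hμ0 : μ ≠ 0 := by rintro rfl; simp [zero_pow hp.ne'] at hμ
  set F : ℕ → M := fun k ↦ μ⁻¹ ^ k • f^[k] x
  have hF : F p = F 0 := by simp only [F, inv_pow, hμ, hx, inv_one, pow_zero, one_smul,
    Function.iterate_zero_apply]
  -- `F` is `p`-periodic, so shifting the index does not change its sum over a period.
  have hshift : ∑ k ∈ Finset.range p, F (k + 1) = ∑ k ∈ Finset.range p, F k :=
    add_right_cancel ((sum_range_succ' F p).symm.trans (hF ▸ sum_range_succ F p))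
  calc f (∑ k ∈ Finset.range p, F k)
      = ∑ k ∈ Finset.range p, μ⁻¹ ^ k • f^[k + 1] x := by
        simp only [F, map_sum, map_smul, Function.iterate_succ_apply']
    _ = ∑ k ∈ Finset.range p, μ • F (k + 1) := sum_congr rfl fun k _ ↦ by
        rw [smul_smul, pow_succ, mul_left_comm, mul_inv_cancel₀ hμ0, mul_one]
    _ = μ • ∑ k ∈ Finset.range p, F k := by rw [← smul_sum, hshift]

theorem Set.MapsTo.iterate_of_shift {ι α : Type*} [AddMonoidWithOne ι] {f : α → α}
    {S : ι → Set α} (h : ∀ i, MapsTo f (S i) (S (i + 1))) (i : ι) (k : ℕ) :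
    MapsTo f^[k] (S i) (S (i + k)) := by
  induction k with
  | zero => simpa using mapsTo_id (S i)
  | succ k ih =>
    rw [Function.iterate_succ', Nat.cast_succ, ← add_assoc]
    exact (h _).comp ih

theorem iterate_apply_self_eq_zero_of_shift {p : ℕ} {A : ZMod p → Type*} [∀ i, Zero (A i)]
    {f : (∀ i, A i) → ∀ i, A i}
    (hf : ∀ i, MapsTo f {b | ∀ j ≠ i, b j = 0} {b | ∀ j ≠ i + 1, b j = 0})
    {i : ZMod p} {b : ∀ i, A i} (hb : ∀ j ≠ i, b j = 0) {k : ℕ} (hk0 : k ≠ 0) (hkp : k < p) :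
    f^[k] b i = 0 := by
  refine MapsTo.iterate_of_shift hf i k hb i fun h ↦ hk0 ?_
  have hk : (k : ZMod p) = 0 := by simpa using congrArg (· - i) h.symm
  exact Nat.eq_zero_of_dvd_of_lt ((ZMod.natCast_eq_zero_iff k p).mp hk) hkp

theorem eigenspace_acts_transitively_general
    (p : ℕ) (hp : 1 ≤ p)
    (W : ZMod p → Type) [∀ i, AddCommGroup (W i)] [∀ i, Module ℂ (W i)]
    (σ : ((i : ZMod p) → Module.End ℂ (W i)) ≃ₐ[ℂ] ((i : ZMod p) → Module.End ℂ (W i)))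
    (hσp : σ ^ p = 1)
    (hshift : ∀ i : ZMod p,
      ⇑σ '' {b : (i : ZMod p) → Module.End ℂ (W i) | ∀ j ≠ i, b j = 0} =
        {b : (i : ZMod p) → Module.End ℂ (W i) | ∀ j ≠ i + 1, b j = 0}) :
    ∀ (i : ZMod p) (j : ℤ) (w : W i), w ≠ 0 → ∀ v : W i,
      ∃ b : (i : ZMod p) → Module.End ℂ (W i),
        σ b = (Complex.exp (2 * Real.pi * Complex.I / (p : ℂ))) ^ j • b ∧
        b i w = v := by
  intro i j w hw v
  obtain ⟨f, hfw⟩ := Module.End.exists_apply_eq_of_ne_zero (K := ℂ) hw v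
  set μ := Complex.exp (2 * Real.pi * Complex.I / (p : ℂ)) ^ j
  have hμ : μ ^ p = 1 := by
    rw [← zpow_natCast, ← zpow_mul, mul_comm j, zpow_mul,
      (Complex.isPrimitiveRoot_exp p (by omega)).zpow_eq_one, one_zpow]
  set b : (i : ZMod p) → Module.End ℂ (W i) := Pi.single i f
  have hσb : σ^[p] b = b := by rw [← AlgEquiv.coe_pow, hσp]; rfl
  refine ⟨∑ k ∈ range p, μ⁻¹ ^ k • σ^[k] b,
    σ.toLinearMap.apply_sum_inv_pow_smul_iterate hσb hμ, ?_⟩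
  have hσ : ∀ i, MapsTo σ {b : (i : ZMod p) → Module.End ℂ (W i) | ∀ j ≠ i, b j = 0}
      {b | ∀ j ≠ i + 1, b j = 0} := fun i ↦ mapsTo_iff_image_subset.mpr (hshift i).subset
  rw [Finset.sum_apply, sum_eq_single_of_mem 0 (mem_range.mpr hp)]
  · simpa [b] using hfw
  · intro k hk hk0
    rw [Pi.smul_apply, iterate_apply_self_eq_zero_of_shift hσ
      (fun l hl ↦ by simp [b, hl]) hk0 (mem_range.mp hk), smul_zero]

/-- **Eigenspace transitivity** (step in the proof of Theorem 6.1).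

Let `W i` (`i ∈ ℤ/p`) be nonzero finite-dimensional complex vector spaces,
`B = ∏ i, End(W i)`, and `σ` a `ℂ`-algebra automorphism of `B` with `σ^p = 1`
mapping each ideal `B_i = End(W i)` (the tuples vanishing in the other
coordinates) onto `B_{i+1}`.  Let `λ = exp(2πi/p)`.  Then for every `i`, every
`j : ℤ`, and every nonzero `w ∈ W i`, the eigenspace
`B^j = {b | σ b = λ^j • b}` satisfies `B^j • w = W i`, where `b ∈ B` acts on
`W i` through the `i`-th coordinate projection. -/
theorem eigenspace_acts_transitively
    (p : ℕ) (hp : 1 ≤ p)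
    (W : ZMod p → Type) [∀ i, AddCommGroup (W i)] [∀ i, Module ℂ (W i)]
    (hW : ∀ i, Nontrivial (W i)) (hfd : ∀ i, FiniteDimensional ℂ (W i))
    (σ : ((i : ZMod p) → Module.End ℂ (W i)) ≃ₐ[ℂ] ((i : ZMod p) → Module.End ℂ (W i)))
    (hσp : σ ^ p = 1)
    (hshift : ∀ i : ZMod p,
      ⇑σ '' {b : (i : ZMod p) → Module.End ℂ (W i) | ∀ j ≠ i, b j = 0} =
        {b : (i : ZMod p) → Module.End ℂ (W i) | ∀ j ≠ i + 1, b j = 0}) :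
    ∀ (i : ZMod p) (j : ℤ) (w : W i), w ≠ 0 → ∀ v : W i,
      ∃ b : (i : ZMod p) → Module.End ℂ (W i),
        σ b = (Complex.exp (2 * Real.pi * Complex.I / (p : ℂ))) ^ j • b ∧
        b i w = v :=
  eigenspace_acts_transitively_general p hp W σ hσp hshift
end
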